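/- Let H be a connected graph of order n2 ≥ 3 with no true twin vertices, and let n1 ≥ 2. Then dim(K_{n1} ⊠ H) = n2·(n1 − 1). -/

import Mathlib

/-!
In `K_n ⊠ H` the distance is the maximum of the distances in the two factors. The vertices of a
fibre `K_n × {b}` are pairwise true twins, and a metric generator contains all but at most one
vertex of any set of pairwise true twins; this gives the lower bound `|H| (n - 1)`. Conversely,
removing one layer `{z} × H` leaves a generator: seen from `(e, f)` with `e ≠ z`, the vertices
`(z, b)` and `(z, d)` are at distances `max 1 (d_H(b, f))` and `max 1 (d_H(d, f))`, and as
functions of `f` these determine the closed neighbourhoods of `b` and `d`, which differ because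
`H` has no true twins.
-/

open SimpleGraph

/-- The strong product of two simple graphs. -/
def strongProd {α β : Type*} (G : SimpleGraph α) (H : SimpleGraph β) :
    SimpleGraph (α × β) where
  Adj x y := x ≠ y ∧ (x.1 = y.1 ∨ G.Adj x.1 y.1) ∧ (x.2 = y.2 ∨ H.Adj x.2 y.2)
  symm := by
    refine ⟨?_⟩
    rintro ⟨a, b⟩ ⟨c, d⟩ ⟨hne, h1, h2⟩
    refine ⟨hne.symm, ?_, ?_⟩
    · rcases h1 with h | h
      · exact Or.inl h.symm
      · exact Or.inr h.symm
    · rcases h2 with h | h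
      · exact Or.inl h.symm
      · exact Or.inr h.symm
  loopless := ⟨by rintro ⟨a, b⟩ ⟨hne, -, -⟩; exact hne rfl⟩

/-- A set `S` is a metric generator for `G` if every pair of distinct vertices is
distinguished by some element of `S`. -/
def IsMetricGen {α : Type*} (G : SimpleGraph α) (S : Set α) : Prop :=
  ∀ x y : α, x ≠ y → ∃ s ∈ S, G.dist x s ≠ G.dist y s

/-- The metric dimension of a graph: minimum cardinality of a metric generator. -/
noncomputable def metricDim {α : Type*} (G : SimpleGraph α) : ℕ :=
  sInf {n | ∃ S : Set α, IsMetricGen G S ∧ S.ncard = n}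

/-- `G` is self `k`-resolved if for all distinct `x, y` there is `w` such that
`d(y,w) ≥ k` and `x` lies on a shortest `y`–`w` path, or symmetrically. -/
def SelfResolved {α : Type*} (G : SimpleGraph α) (k : ℕ) : Prop :=
  ∀ x y : α, x ≠ y → ∃ w : α,
    (k ≤ G.dist y w ∧ G.dist y x + G.dist x w = G.dist y w) ∨
    (k ≤ G.dist x w ∧ G.dist x y + G.dist y w = G.dist x w)

/-- Two vertices are true twins if their closed neighborhoods coincide. -/
def TrueTwins {α : Type*} (G : SimpleGraph α) (u v : α) : Prop :=
  insert u (G.neighborSet u) = insert v (G.neighborSet v)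

/-- The number of equivalence classes of the true twin relation. -/
noncomputable def numTrueTwinClasses {α : Type*} (G : SimpleGraph α) : ℕ :=
  Nat.card (Quotient (Setoid.ker (fun v => insert v (G.neighborSet v))))

namespace SimpleGraph

variable {V W : Type*} {G : SimpleGraph V}

theorem edist_map_le_of_edist_le_one {G' : SimpleGraph W} (f : V → W)
    (hf : ∀ u v, G.Adj u v → G'.edist (f u) (f v) ≤ 1) (u v : V) :
    G'.edist (f u) (f v) ≤ G.edist u v := by
  by_cases huv : G.Reachable u v
  · obtain ⟨p, hp⟩ := huv.exists_walk_length_eq_edist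
    rw [← hp]
    clear hp huv
    induction p with
    | nil => simp
    | @cons u w v h p ih =>
      calc G'.edist (f u) (f v) ≤ G'.edist (f u) (f w) + G'.edist (f w) (f v) :=
            G'.edist_triangle
        _ ≤ 1 + p.length := add_le_add (hf u w h) ih
        _ = (Walk.cons h p).length := by rw [Walk.length_cons]; push_cast; ring
  · simp [edist_eq_top_of_not_reachable huv]

theorem Reachable.exists_eq_or_adj_dist_le_sub_one {u v : V} (h : G.Reachable u v) :
    ∃ u', (u = u' ∨ G.Adj u u') ∧ G.dist u' v ≤ G.dist u v - 1 := by
  obtain ⟨p, hp⟩ := h.exists_walk_length_eq_dist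
  cases p with
  | nil => exact ⟨u, Or.inl rfl, by simp⟩
  | cons hadj q =>
    refine ⟨_, Or.inr hadj, ?_⟩
    rw [← hp, Walk.length_cons, Nat.add_sub_cancel]
    exact dist_le q

theorem TrueTwins.dist_le {x y s : V} (h : TrueTwins G x y) (hs : s ≠ x) :
    G.dist y s ≤ G.dist x s := by
  by_cases hxs : G.Reachable x s
  · obtain ⟨p, hp⟩ := hxs.exists_walk_length_eq_dist
    cases p with
    | nil => exact absurd rfl hs
    | @cons _ x₁ _ hadj q =>
      -- the first step `x₁` of a shortest `x`-`s` path lies in the closed neighbourhood of `y`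
      have hx₁ : x₁ ∈ insert y (G.neighborSet y) := h ▸ Set.mem_insert_of_mem x hadj
      rw [← hp, Walk.length_cons]
      rcases hx₁ with rfl | hyx₁
      · exact (SimpleGraph.dist_le q).trans (Nat.le_succ _)
      · exact SimpleGraph.dist_le (Walk.cons hyx₁ q)
  · by_cases hxy : x = y
    · rw [hxy]
    · have hadj : G.Adj x y := by
        have : y ∈ insert x (G.neighborSet x) := h ▸ Set.mem_insert y _
        exact this.resolve_left (Ne.symm hxy)
      have hys : ¬G.Reachable y s := fun hys => hxs (hadj.reachable.trans hys)
      simp [dist_eq_zero_of_not_reachable hys]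

theorem TrueTwins.dist_eq {x y s : V} (h : TrueTwins G x y) (hsx : s ≠ x) (hsy : s ≠ y) :
    G.dist x s = G.dist y s :=
  le_antisymm (TrueTwins.dist_le h.symm hsy) (h.dist_le hsx)

theorem trueTwins_of_forall_max_one_dist_eq (hG : G.Connected) {u v : V}
    (h : ∀ w, max 1 (G.dist u w) = max 1 (G.dist v w)) : TrueTwins G u v := by
  have hball : ∀ x w, w ∈ insert x (G.neighborSet x) ↔ max 1 (G.dist x w) = 1 := by
    intro x w
    rw [max_eq_left_iff, Nat.le_one_iff_eq_zero_or_eq_one, hG.dist_eq_zero_iff,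
      dist_eq_one_iff_adj, Set.mem_insert_iff, mem_neighborSet, eq_comm]
  ext w
  rw [hball, hball, h]

theorem trueTwins_top (u v : V) : TrueTwins (⊤ : SimpleGraph V) u v := by
  ext w
  by_cases hu : w = u <;> by_cases hv : w = v <;> simp [hu, hv, eq_comm, em]

theorem IsMetricGen.mem_or_mem_of_trueTwins {S : Set V} (hS : IsMetricGen G S) {x y : V}
    (hxy : x ≠ y) (h : TrueTwins G x y) : x ∈ S ∨ y ∈ S := by
  by_contra! hn
  obtain ⟨s, hs, hd⟩ := hS x y hxy
  exact hd (h.dist_eq (ne_of_mem_of_not_mem hs hn.1) (ne_of_mem_of_not_mem hs hn.2))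

theorem isMetricGen_of_forall_notMem (hG : G.Connected) {S : Set V}
    (h : ∀ x y, x ∉ S → y ∉ S → x ≠ y → ∃ s ∈ S, G.dist x s ≠ G.dist y s) :
    IsMetricGen G S := by
  intro x y hxy
  by_cases hx : x ∈ S
  · exact ⟨x, hx, by rw [dist_self]; exact (hG.pos_dist_of_ne hxy.symm).ne⟩
  by_cases hy : y ∈ S
  · exact ⟨y, hy, by rw [dist_self]; exact (hG.pos_dist_of_ne hxy).ne'⟩
  exact h x y hx hy hxy

theorem metricDim_eq_of_isMetricGen {S : Set V} {n : ℕ} (hS : IsMetricGen G S)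
    (hcard : S.ncard = n) (hmin : ∀ T, IsMetricGen G T → n ≤ T.ncard) : metricDim G = n :=
  le_antisymm (Nat.sInf_le ⟨S, hS, hcard⟩)
    (le_csInf ⟨n, S, hS, hcard⟩ (by rintro _ ⟨T, hT, rfl⟩; exact hmin T hT))

end SimpleGraph

theorem Set.card_mul_sub_one_le_ncard {α β : Type*} [Fintype α] [Fintype β] {S : Set (α × β)}
    (h : ∀ a c b, a ≠ c → (a, b) ∈ S ∨ (c, b) ∈ S) :
    Fintype.card β * (Fintype.card α - 1) ≤ S.ncard := by
  have hcompl : Sᶜ.ncard ≤ Fintype.card β := by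
    calc Sᶜ.ncard ≤ (Set.univ : Set β).ncard := by
          refine Set.ncard_le_ncard_of_injOn Prod.snd (fun _ _ => trivial) ?_
          rintro ⟨a, b⟩ hp ⟨c, d⟩ hq (rfl : b = d)
          by_contra hne
          exact (h a c b fun hac => hne (hac ▸ rfl)).elim hp hq
      _ = Fintype.card β := by rw [Set.ncard_univ, Nat.card_eq_fintype_card]
  have hsum := Set.ncard_add_ncard_compl S
  rw [Nat.card_eq_fintype_card, Fintype.card_prod] at hsum
  rw [Nat.mul_sub_one, mul_comm]
  omega

section StrongProd

variable {α β : Type*} {G : SimpleGraph α} {H : SimpleGraph β}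

theorem edist_fst_le_edist_strongProd (x y : α × β) :
    G.edist x.1 y.1 ≤ (strongProd G H).edist x y :=
  edist_map_le_of_edist_le_one Prod.fst
    (fun _ _ (h : (strongProd G H).Adj _ _) => edist_le_one_iff_adj_or_eq.2 h.2.1.symm) x y

theorem edist_snd_le_edist_strongProd (x y : α × β) :
    H.edist x.2 y.2 ≤ (strongProd G H).edist x y :=
  edist_map_le_of_edist_le_one Prod.snd
    (fun _ _ (h : (strongProd G H).Adj _ _) => edist_le_one_iff_adj_or_eq.2 h.2.2.symm) x y

theorem exists_walk_strongProd_length_le (hG : G.Connected) (hH : H.Connected) (k : ℕ)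
    (x y : α × β) (h₁ : G.dist x.1 y.1 ≤ k) (h₂ : H.dist x.2 y.2 ≤ k) :
    ∃ w : (strongProd G H).Walk x y, w.length ≤ k := by
  induction k generalizing x with
  | zero =>
    obtain rfl : x = y :=
      Prod.ext (hG.dist_eq_zero_iff.1 (by omega)) (hH.dist_eq_zero_iff.1 (by omega))
    exact ⟨Walk.nil, le_rfl⟩
  | succ k ih =>
    obtain ⟨a, ha, hda⟩ := (hG.preconnected x.1 y.1).exists_eq_or_adj_dist_le_sub_one
    obtain ⟨b, hb, hdb⟩ := (hH.preconnected x.2 y.2).exists_eq_or_adj_dist_le_sub_one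
    obtain ⟨w, hw⟩ := ih (a, b) (by dsimp; omega) (by dsimp; omega)
    by_cases hx : x = (a, b)
    · subst hx
      exact ⟨w, by omega⟩
    · have hadj : (strongProd G H).Adj x (a, b) := ⟨hx, ha, hb⟩
      exact ⟨Walk.cons hadj w, by rw [Walk.length_cons]; omega⟩

theorem SimpleGraph.Connected.strongProd (hG : G.Connected) (hH : H.Connected) :
    (strongProd G H).Connected := by
  have := hG.nonempty
  have := hH.nonempty
  refine ⟨fun x y => ?_⟩
  obtain ⟨w, -⟩ := exists_walk_strongProd_length_le hG hH _ x y le_sup_left le_sup_right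
  exact ⟨w⟩

theorem dist_strongProd (hG : G.Connected) (hH : H.Connected) (x y : α × β) :
    (strongProd G H).dist x y = max (G.dist x.1 y.1) (H.dist x.2 y.2) := by
  apply le_antisymm
  · obtain ⟨w, hw⟩ := exists_walk_strongProd_length_le hG hH _ x y le_sup_left le_sup_right
    exact (dist_le w).trans hw
  · have hxy := (hG.strongProd hH).preconnected x y
    refine max_le (ENat.natCast_le_natCast.1 ?_) (ENat.natCast_le_natCast.1 ?_)
    · rw [(hG.preconnected _ _).coe_dist_eq_edist, hxy.coe_dist_eq_edist]
      exact edist_fst_le_edist_strongProd x y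
    · rw [(hH.preconnected _ _).coe_dist_eq_edist, hxy.coe_dist_eq_edist]
      exact edist_snd_le_edist_strongProd x y

theorem insert_neighborSet_strongProd (x : α × β) :
    insert x ((strongProd G H).neighborSet x) =
      insert x.1 (G.neighborSet x.1) ×ˢ insert x.2 (H.neighborSet x.2) := by
  ext y
  simp only [Set.mem_insert_iff, mem_neighborSet, Set.mem_prod, strongProd]
  by_cases hxy : y = x
  · simp [hxy]
  · simp only [hxy, Ne.symm hxy, false_or, ne_eq, not_false_eq_true, true_and]
    tauto

theorem TrueTwins.strongProd_left {a c : α} (h : TrueTwins G a c) (b : β) :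
    TrueTwins (strongProd G H) (a, b) (c, b) := by
  rw [TrueTwins, insert_neighborSet_strongProd, insert_neighborSet_strongProd]
  exact congrArg (· ×ˢ _) h

end StrongProd

section CompleteStrongProd

variable {α β : Type*} {H : SimpleGraph β}

theorem isMetricGen_top_strongProd (hH : H.Connected) (htwin : ∀ u v, TrueTwins H u v → u = v)
    {z e : α} (hze : z ≠ e) :
    IsMetricGen (strongProd (⊤ : SimpleGraph α) H) ({z}ᶜ ×ˢ Set.univ) := by
  have : Nonempty α := ⟨z⟩
  have hK : (⊤ : SimpleGraph α).Connected := connected_top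
  refine isMetricGen_of_forall_notMem (hK.strongProd hH) ?_
  rintro ⟨a, b⟩ ⟨c, d⟩ ha hc hne
  obtain rfl : a = z := by simpa using ha
  obtain rfl : c = a := by simpa using hc
  have hbd : b ≠ d := fun hbd => hne (hbd ▸ rfl)
  obtain ⟨f, hf⟩ : ∃ f, max 1 (H.dist b f) ≠ max 1 (H.dist d f) := by
    by_contra! h
    exact hbd (htwin b d (trueTwins_of_forall_max_one_dist_eq hH h))
  refine ⟨(e, f), by simpa using hze.symm, ?_⟩
  simpa [dist_strongProd hK hH, dist_top_of_ne hze] using hf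

theorem card_mul_sub_one_le_ncard_of_isMetricGen [Fintype α] [Fintype β]
    {S : Set (α × β)} (hS : IsMetricGen (strongProd (⊤ : SimpleGraph α) H) S) :
    Fintype.card β * (Fintype.card α - 1) ≤ S.ncard :=
  Set.card_mul_sub_one_le_ncard fun a c b hac =>
    hS.mem_or_mem_of_trueTwins (by simpa using hac) ((trueTwins_top a c).strongProd_left b)

end CompleteStrongProd

theorem stmt_14_general {β : Type*} [Fintype β] (H : SimpleGraph β) (n1 : ℕ)
    (hH : H.Connected)
    (htwin : ∀ u v : β, TrueTwins H u v → u = v) (hn1 : 2 ≤ n1) :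
    metricDim (strongProd (⊤ : SimpleGraph (Fin n1)) H) =
      Fintype.card β * (n1 - 1) := by
  let z : Fin n1 := ⟨0, by omega⟩
  have hz : z ≠ ⟨1, by omega⟩ := by simp [z, Fin.ext_iff]
  refine metricDim_eq_of_isMetricGen (isMetricGen_top_strongProd hH htwin hz) ?_
    fun T hT => by simpa using card_mul_sub_one_le_ncard_of_isMetricGen hT
  rw [Set.ncard_prod, Set.ncard_compl, Set.ncard_singleton, Set.ncard_univ]
  simp [mul_comm]

theorem stmt_14 {β : Type*} [Fintype β] (H : SimpleGraph β) (n1 : ℕ)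
    (hH : H.Connected) (hcard : 3 ≤ Fintype.card β)
    (htwin : ∀ u v : β, TrueTwins H u v → u = v) (hn1 : 2 ≤ n1) :
    metricDim (strongProd (⊤ : SimpleGraph (Fin n1)) H) =
      Fintype.card β * (n1 - 1) :=
  stmt_14_general H n1 hH htwin hn1
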